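/- arXiv:math/0108036 — 5 statements merged into one kernel-verified Lean document; each statement's English description precedes it below -/
import Mathlib

section
/- In a left-adjunctive logic, if the logic is finitely trivializable then it has a bottom particle. -/
theorem stmt_12 {For : Type*} [Nonempty For] (Cons : Set For → For → Prop)
    (conj : For → For → For)
    (refl : ∀ (Γ : Set For) (A : For), A ∈ Γ → Cons Γ A)
    (mono : ∀ (Δ Γ : Set For) (A : For), Cons Δ A → Δ ⊆ Γ → Cons Γ A)
    (trans : ∀ (Δ Γ : Set For) (A B : For),
      Cons Δ A → Cons (Γ ∪ {A}) B → Cons (Δ ∪ Γ) B)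
    (hadjnb : ∃ A B : For, ¬ ∀ (Γ : Set For) (D : For), Cons (Γ ∪ {conj A B}) D)
    (hadj : ∀ (Γ : Set For) (A B D : For),
      Cons (Γ ∪ {A, B}) D → Cons (Γ ∪ {conj A B}) D)
    (hfin : ∃ Γ : Set For, Γ.Finite ∧ ∀ B : For, Cons Γ B) :
    ∃ bot : For, ∀ (Γ : Set For) (B : For), Cons (Γ ∪ {bot}) B := by
  obtain ⟨Γ₀, hΓfin, hΓtriv⟩ := hfin
  -- key: for every finite set s there is C absorbing s
  have key : ∀ s : Set For, s.Finite →
      ∃ C : For, ∀ (Δ : Set For) (D : For), Cons (Δ ∪ s) D → Cons (Δ ∪ {C}) D := by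
    intro s hs
    refine Set.Finite.induction_on
      (motive := fun s _ => ∃ C : For, ∀ (Δ : Set For) (D : For),
        Cons (Δ ∪ s) D → Cons (Δ ∪ {C}) D) s hs ?_ ?_
    · obtain ⟨C⟩ := ‹Nonempty For›
      exact ⟨C, fun Δ D h => mono _ _ _ (by simpa using h) (Set.subset_union_left)⟩
    · intro a t ha ht ih
      obtain ⟨C, hC⟩ := ih
      refine ⟨conj a C, fun Δ D h => ?_⟩
      have h1 : Cons ((Δ ∪ {a}) ∪ t) D := by
        have : Δ ∪ insert a t = (Δ ∪ {a}) ∪ t := by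
          ext x; simp [or_assoc]; try tauto
        rwa [this] at h
      have h2 := hC (Δ ∪ {a}) D h1
      have h3 : Cons (Δ ∪ {a, C}) D := by
        have : (Δ ∪ {a}) ∪ {C} = Δ ∪ {a, C} := by
          ext x; simp [or_assoc]; try tauto
        rwa [this] at h2
      exact hadj Δ a C D h3
  obtain ⟨C, hC⟩ := key Γ₀ hΓfin
  exact ⟨C, fun Δ B => hC Δ B (mono _ _ _ (hΓtriv B) Set.subset_union_right)⟩
end

section
/- Any paraconsistent logic that has modus ponens, a left-adjunctive disjunction ∨, an implication →, and a bottom particle ⊥ can be characterized as a logic of formal inconsistency: defining ∘A as (A → ⊥) ∨ (¬A → ⊥), the set {∘A, A, ¬A} is a trivial theory for every formula A. -/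
theorem stmt_13 {For : Type*} (Cons : Set For → For → Prop)
    (neg : For → For) (imp : For → For → For) (disj : For → For → For) (bot : For)
    (refl : ∀ (Γ : Set For) (A : For), A ∈ Γ → Cons Γ A)
    (mono : ∀ (Δ Γ : Set For) (A : For), Cons Δ A → Δ ⊆ Γ → Cons Γ A)
    (trans : ∀ (Δ Γ : Set For) (A B : For),
      Cons Δ A → Cons (Γ ∪ {A}) B → Cons (Δ ∪ Γ) B)
    (hmp : ∀ (Γ : Set For) (A B : For), Cons (Γ ∪ {A, imp A B}) B)
    (hbot : ∀ (Γ : Set For) (B : For), Cons (Γ ∪ {bot}) B)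
    (hdisj : ∀ (B C : For) (Γ Δ : Set For) (D : For),
      Cons (Γ ∪ {B}) D → Cons (Δ ∪ {C}) D → Cons (Γ ∪ Δ ∪ {disj B C}) D)
    (hpara : ∃ (Γ : Set For) (A B : For), ¬ Cons (Γ ∪ {A, neg A}) B) :
    ∀ A B : For,
      Cons ({disj (imp A bot) (imp (neg A) bot), A, neg A} : Set For) B := by
  intro A B
  have key : ∀ X : For, Cons (({X} : Set For) ∪ {imp X bot}) B := by
    intro X
    have h1 : Cons ((∅ : Set For) ∪ {X, imp X bot}) bot := hmp ∅ X bot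
    have h2 : Cons ((∅ : Set For) ∪ {bot}) B := hbot ∅ B
    have h3 := trans _ _ _ _ h1 h2
    apply mono _ _ _ h3
    intro x hx
    simp only [Set.union_empty, Set.empty_union, Set.mem_insert_iff, Set.mem_singleton_iff,
      Set.mem_union] at *
    tauto
  have h := hdisj (imp A bot) (imp (neg A) bot) {A} {neg A} B (key A) (key (neg A))
  apply mono _ _ _ h
  intro x hx
  simp only [Set.mem_union, Set.mem_insert_iff, Set.mem_singleton_iff] at *
  tauto
end

section
/- The formula (A → (¬A → B)) (the 'theorem of Pseudo-Scotus') is not provable in C_min. This can be shown using the three-valued matrices of the logic Pac, which validate all axioms of C_min and preserve validity under modus ponens, while failing to validate (A → (¬A → B)). -/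
inductive Fm
  | atom : ℕ → Fm
  | conj : Fm → Fm → Fm
  | disj : Fm → Fm → Fm
  | imp : Fm → Fm → Fm
  | neg : Fm → Fm

inductive CminAx : Fm → Prop
  | min1 (A B : Fm) : CminAx (.imp A (.imp B A))
  | min2 (A B C : Fm) :
      CminAx (.imp (.imp A B) (.imp (.imp A (.imp B C)) (.imp A C)))
  | min3 (A B : Fm) : CminAx (.imp A (.imp B (.conj A B)))
  | min4 (A B : Fm) : CminAx (.imp (.conj A B) A)
  | min5 (A B : Fm) : CminAx (.imp (.conj A B) B)
  | min6 (A B : Fm) : CminAx (.imp A (.disj A B))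
  | min7 (A B : Fm) : CminAx (.imp B (.disj A B))
  | min8 (A B C : Fm) :
      CminAx (.imp (.imp A C) (.imp (.imp B C) (.imp (.disj A B) C)))
  | min9 (A B : Fm) : CminAx (.disj A (.imp A B))
  | min10 (A : Fm) : CminAx (.disj A (.neg A))
  | min11 (A : Fm) : CminAx (.imp (.neg (.neg A)) A)

inductive CminDeriv : Set Fm → Fm → Prop
  | prem {Γ : Set Fm} {A : Fm} : A ∈ Γ → CminDeriv Γ A
  | axm {Γ : Set Fm} {A : Fm} : CminAx A → CminDeriv Γ A
  | mp {Γ : Set Fm} {A B : Fm} :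
      CminDeriv Γ (.imp A B) → CminDeriv Γ A → CminDeriv Γ B


namespace PacSem

def pimp (a b : Fin 3) : Fin 3 := if a = 0 then 2 else b
def pneg (a : Fin 3) : Fin 3 := 2 - a

def eval (v : ℕ → Fin 3) : Fm → Fin 3
  | .atom n => v n
  | .conj a b => min (eval v a) (eval v b)
  | .disj a b => max (eval v a) (eval v b)
  | .imp a b => pimp (eval v a) (eval v b)
  | .neg a => pneg (eval v a)

lemma ax_sound (v : ℕ → Fin 3) {A : Fm} (h : CminAx A) : eval v A ≠ 0 := by
  induction h with
  | min1 A B => simp only [eval]; generalize eval v A = a; generalize eval v B = b; revert a b; decide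
  | min2 A B C => simp only [eval]; generalize eval v A = a; generalize eval v B = b; generalize eval v C = c; revert a b c; decide
  | min3 A B => simp only [eval]; generalize eval v A = a; generalize eval v B = b; revert a b; decide
  | min4 A B => simp only [eval]; generalize eval v A = a; generalize eval v B = b; revert a b; decide
  | min5 A B => simp only [eval]; generalize eval v A = a; generalize eval v B = b; revert a b; decide
  | min6 A B => simp only [eval]; generalize eval v A = a; generalize eval v B = b; revert a b; decide
  | min7 A B => simp only [eval]; generalize eval v A = a; generalize eval v B = b; revert a b; decide
  | min8 A B C => simp only [eval]; generalize eval v A = a; generalize eval v B = b; generalize eval v C = c; revert a b c; decide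
  | min9 A B => simp only [eval]; generalize eval v A = a; generalize eval v B = b; revert a b; decide
  | min10 A => simp only [eval]; generalize eval v A = a; revert a; decide
  | min11 A => simp only [eval]; generalize eval v A = a; revert a; decide

lemma sound (v : ℕ → Fin 3) {Γ : Set Fm} {A : Fm}
    (hΓ : ∀ B ∈ Γ, eval v B ≠ 0) (h : CminDeriv Γ A) : eval v A ≠ 0 := by
  induction h with
  | prem hm => exact hΓ _ hm
  | axm ha => exact ax_sound v ha
  | mp _ _ ih1 ih2 =>
    simp only [eval, pimp] at ih1
    rw [if_neg ih2] at ih1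
    exact ih1

end PacSem

/-- The schema (A → (¬A → B)) (Pseudo-Scotus) is not provable in C_min. -/
theorem stmt_16 :
    ¬ ∀ A B : Fm, CminDeriv (∅ : Set Fm) (.imp A (.imp (.neg A) B)) := by

  intro h
  have := PacSem.sound (fun n => if n = 0 then 1 else 0) (by simp) (h (.atom 0) (.atom 1))
  simp [PacSem.eval, PacSem.pimp, PacSem.pneg] at this
end

section
/- Full contraposition cannot hold in any paraconsistent extension of bC: if a logic extends positive classical logic (so that B ⊢ A → B holds and modus ponens holds), validates double negation elimination ¬¬C ⊢ C, and validates the rule (A → B) ⊢ (¬B → ¬A) for all A, B, then B, ¬B ⊢ C holds for all B, C, i.e., the logic is explosive. -/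
theorem stmt_18 {For : Type*} (Cons : Set For → For → Prop)
    (neg : For → For) (imp : For → For → For)
    (refl : ∀ (Γ : Set For) (A : For), A ∈ Γ → Cons Γ A)
    (mono : ∀ (Δ Γ : Set For) (A : For), Cons Δ A → Δ ⊆ Γ → Cons Γ A)
    (trans : ∀ (Δ Γ : Set For) (A B : For),
      Cons Δ A → Cons (Γ ∪ {A}) B → Cons (Δ ∪ Γ) B)
    (hmp : ∀ (Γ : Set For) (A B : For), Cons (Γ ∪ {A, imp A B}) B)
    (hK : ∀ A B : For, Cons ({B} : Set For) (imp A B))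
    (hdne : ∀ C : For, Cons ({neg (neg C)} : Set For) C)
    (hcontrap : ∀ A B : For, Cons ({imp A B} : Set For) (imp (neg B) (neg A))) :
    ∀ B C : For, Cons ({B, neg B} : Set For) C := by
  intro B C
  -- Step 1: {B} ⊢ ¬B → ¬¬C
  have h1 : Cons ({B} : Set For) (imp (neg B) (neg (neg C))) := by
    have hc : Cons ((∅ : Set For) ∪ {imp (neg C) B}) (imp (neg B) (neg (neg C))) := by
      refine mono _ _ _ (hcontrap (neg C) B) ?_
      intro x hx; simp at hx ⊢; exact hx
    have := trans {B} ∅ (imp (neg C) B) (imp (neg B) (neg (neg C))) (hK (neg C) B) hc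
    exact mono _ _ _ this (by simp)
  -- Step 2: {B, ¬B} ⊢ ¬¬C  via modus ponens
  have h2 : Cons ({B, neg B} : Set For) (neg (neg C)) := by
    have h1' : Cons ({B, neg B} : Set For) (imp (neg B) (neg (neg C))) :=
      mono _ _ _ h1 (by intro x hx; simp at hx; simp [hx])
    have hmp' : Cons (({B, neg B} : Set For) ∪ {imp (neg B) (neg (neg C))}) (neg (neg C)) := by
      have := hmp ({B} : Set For) (neg B) (neg (neg C))
      refine mono _ _ _ this ?_
      intro x hx; simp at hx ⊢; tauto
    have := trans ({B, neg B} : Set For) ({B, neg B} : Set For) _ _ h1' hmp'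
    exact mono _ _ _ this (by simp)
  -- Step 3: apply DNE
  have hd : Cons ((∅ : Set For) ∪ {neg (neg C)}) C := by
    refine mono _ _ _ (hdne C) ?_
    intro x hx; simp at hx ⊢; exact hx
  have := trans ({B, neg B} : Set For) ∅ (neg (neg C)) C h2 hd
  exact mono _ _ _ this (by simp)
end

section
/- (IpE) cannot hold in any adjunctive paraconsistent logic in which ¬(A ∧ ¬A) is a theorem and (A ∧ ¬A) is equivalent to ¬¬(A ∧ ¬A): under these hypotheses, intersubstitutivity of provable equivalents forces A, ¬A ⊢ B for all A, B, contradicting paraconsistency. -/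
theorem stmt_19 {For : Type*} (Cons : Set For → For → Prop)
    (neg : For → For) (conj : For → For → For)
    (refl : ∀ (Γ : Set For) (A : For), A ∈ Γ → Cons Γ A)
    (mono : ∀ (Δ Γ : Set For) (A : For), Cons Δ A → Δ ⊆ Γ → Cons Γ A)
    (trans : ∀ (Δ Γ : Set For) (A B : For),
      Cons Δ A → Cons (Γ ∪ {A}) B → Cons (Δ ∪ Γ) B)
    (hadj : ∀ (Γ : Set For) (A B D : For),
      Cons (Γ ∪ {A, B}) D ↔ Cons (Γ ∪ {conj A B}) D)
    (hIpE : ∀ A B : For,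
      (Cons ({A} : Set For) B ∧ Cons ({B} : Set For) A) →
      (Cons ({neg A} : Set For) (neg B) ∧ Cons ({neg B} : Set For) (neg A)))
    (hthm : ∀ A : For, Cons (∅ : Set For) (neg (conj A (neg A))))
    (hdn : ∀ A : For,
      Cons ({conj A (neg A)} : Set For) (neg (neg (conj A (neg A)))) ∧
      Cons ({neg (neg (conj A (neg A)))} : Set For) (conj A (neg A))) :
    ∀ A B : For, Cons ({A, neg A} : Set For) B := by
  intro A B
  set CA := conj A (neg A) with hCA
  set CB := conj B (neg B) with hCB
  -- chain lemma
  have chain : ∀ X Y Z : For, Cons {X} Y → Cons {Y} Z → Cons {X} Z := by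
    intro X Y Z h1 h2
    have := trans {X} ∅ Y Z h1 (by simpa using h2)
    simpa using this
  -- neg CA ⊣⊢ neg CB (both are theorems)
  have h1 : Cons ({neg CA} : Set For) (neg CB) :=
    mono ∅ {neg CA} _ (hthm B) (Set.empty_subset _)
  have h2 : Cons ({neg CB} : Set For) (neg CA) :=
    mono ∅ {neg CB} _ (hthm A) (Set.empty_subset _)
  have hI := hIpE (neg CA) (neg CB) ⟨h1, h2⟩
  -- {CA} ⊢ CB
  have hstep : Cons ({CA} : Set For) CB :=
    chain _ _ _ ((hdn A).1) (chain _ _ _ hI.1 ((hdn B).2))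
  -- {A, neg A} ⊢ CA
  have hAA : Cons ({A, neg A} : Set For) CA := by
    have := (hadj ∅ A (neg A) CA).2 (by simpa using refl {CA} CA rfl)
    simpa using this
  -- {CB} ⊢ B
  have hCBB : Cons ({CB} : Set For) B := by
    have := (hadj ∅ B (neg B) B).1 (by
      simp only [Set.empty_union]
      exact refl _ B (by simp))
    simpa using this
  have h3 : Cons ({A, neg A} : Set For) CB := by
    have := trans {A, neg A} ∅ CA CB hAA (by simpa using hstep)
    simpa using this
  have := trans {A, neg A} ∅ CB B h3 (by simpa using hCBB)
  simpa using this
end
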